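/- Let C ⊆ ℝⁿ be a nonempty closed convex cone which is relatively proper, i.e., C ≠ span_ℝ(C) as sets, let m := dim span_ℝ(C), and let v := ∫_{C ∩ S^{n-1}} x dμH^{m-1}(x) (a Bochner integral). Then (a) ⟨x, v⟩ ≥ 0 for every x ∈ C, and (b) the set {x ∈ C : ⟨x, v⟩ = 0} is symmetric about the origin: {x ∈ C : ⟨x,v⟩ = 0} = −{x ∈ C : ⟨x,v⟩ = 0}. -/

import Mathlib

/-!
Let `R` be the reflection in the hyperplane `xᗮ`, for `x ∈ C`. It maps the points `y` of `C ∩ S`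
with `⟪x, y⟫ < 0` back into `C ∩ S` (because `R y = y - 2 ⟪x, y⟫ / ‖x‖² • x`), preserves Hausdorff
measure and changes the sign of `⟪x, ·⟫`. So the negative part of `⟪x, v⟫ = ∫_{C ∩ S} ⟪x, y⟫`
cancels against the image under `R`, and what is left is the integral of `⟪x, ·⟫ ≥ 0` over the
rest of `C ∩ S`. If `-x ∉ C`, the points of `C ∩ S` near `x / ‖x‖` belong to this rest, since
their reflections lie near `-x / ‖x‖`, outside `C`. They carry positive `(m-1)`-dimensional measure
because `C` has interior in its span, and the measure of spherical caps is compared with that of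
balls in `uᗮ` through the chart `a ↦ a + √(1 - ‖a‖²) • u` and the orthogonal projection.
-/

open scoped RealInnerProductSpace ENNReal Topology
open MeasureTheory Metric Module Set Submodule

theorem setIntegral_eq_setIntegral_sdiff_image_of_odd {α : Type*} [MeasurableSpace α]
    {μ : Measure α} {f : α → ℝ} {s : Set α} {e : α → α} (hs : MeasurableSet s)
    (hfm : Measurable f) (hf : IntegrableOn f s μ) (he : MeasurePreserving e μ μ)
    (hemb : MeasurableEmbedding e) (hfe : ∀ y, f (e y) = -f y)
    (hes : MapsTo e (s ∩ {y | f y < 0}) s) :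
    ∫ y in s, f y ∂μ = ∫ y in (s ∩ {y | 0 ≤ f y}) \ e '' (s ∩ {y | f y < 0}), f y ∂μ := by
  set N := s ∩ {y | f y < 0}
  have hN : MeasurableSet N := hs.inter (measurableSet_lt hfm measurable_const)
  have hsplit :=
    integral_inter_add_sdiff (measurableSet_le (measurable_const (a := (0 : ℝ))) hfm) hf
  rw [show s \ {y | 0 ≤ f y} = N by ext; simp [N]] at hsplit
  have hodd : ∫ y in e '' N, f y ∂μ = -∫ y in N, f y ∂μ := by
    rw [he.setIntegral_image_emb hemb]
    simp_rw [hfe]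
    exact integral_neg _
  have himage : e '' N ⊆ s ∩ {y | 0 ≤ f y} := by
    rintro _ ⟨y, hy, rfl⟩
    exact ⟨hes hy, by simpa [hfe] using hy.2.le⟩
  have hsdiff := setIntegral_sdiff (hemb.measurableSet_image.mpr hN)
    (hf.mono_set inter_subset_left) himage
  linarith

theorem setIntegral_nonneg_of_odd {α : Type*} [MeasurableSpace α]
    {μ : Measure α} {f : α → ℝ} {s : Set α} {e : α → α} (hs : MeasurableSet s)
    (hfm : Measurable f) (hf : IntegrableOn f s μ) (he : MeasurePreserving e μ μ)
    (hemb : MeasurableEmbedding e) (hfe : ∀ y, f (e y) = -f y)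
    (hes : MapsTo e (s ∩ {y | f y < 0}) s) :
    0 ≤ ∫ y in s, f y ∂μ := by
  rw [setIntegral_eq_setIntegral_sdiff_image_of_odd hs hfm hf he hemb hfe hes]
  exact setIntegral_nonneg ((hs.inter (measurableSet_le measurable_const hfm)).diff
    (hemb.measurableSet_image.mpr (hs.inter (measurableSet_lt hfm measurable_const))))
    fun y hy ↦ hy.1.2

theorem setIntegral_pos_of_odd {α : Type*} [MeasurableSpace α]
    {μ : Measure α} {f : α → ℝ} {s : Set α} {e : α → α} (hs : MeasurableSet s)
    (hfm : Measurable f) (hf : IntegrableOn f s μ) (he : MeasurePreserving e μ μ)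
    (hemb : MeasurableEmbedding e) (hfe : ∀ y, f (e y) = -f y)
    (hes : MapsTo e (s ∩ {y | f y < 0}) s) (hinv : Function.Involutive e) {t : Set α} (hts : t ⊆ s)
    (hft : ∀ y ∈ t, 0 < f y) (het : ∀ y ∈ t, e y ∉ s) (ht : 0 < μ t) :
    0 < ∫ y in s, f y ∂μ := by
  rw [setIntegral_eq_setIntegral_sdiff_image_of_odd hs hfm hf he hemb hfe hes]
  have hA : MeasurableSet ((s ∩ {y | 0 ≤ f y}) \ e '' (s ∩ {y | f y < 0})) :=
    (hs.inter (measurableSet_le measurable_const hfm)).diff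
      (hemb.measurableSet_image.mpr (hs.inter (measurableSet_lt hfm measurable_const)))
  rw [setIntegral_pos_iff_support_of_nonneg_ae ((ae_restrict_mem hA).mono fun y hy ↦ hy.1.2)
    (hf.mono_set (sdiff_subset.trans inter_subset_left))]
  refine ht.trans_le (measure_mono fun y hy ↦ ⟨(hft y hy).ne', ⟨hts hy, (hft y hy).le⟩, ?_⟩)
  rintro ⟨z, hz, rfl⟩
  exact het _ hy (by rw [hinv]; exact hz.1)

variable {E : Type*} [NormedAddCommGroup E] [InnerProductSpace ℝ E]

section SphereChart

variable {u : E}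

/-- For `‖a‖ ≤ 1`, the point of the unit hemisphere `{y | 0 ≤ ⟪u, y⟫}` whose orthogonal projection
to `uᗮ` is `a`. -/
noncomputable def sphereChart (u : E) (a : (ℝ ∙ u)ᗮ) : E :=
  a + √(1 - ‖a‖ ^ 2) • u

theorem norm_coe_add_smul_sq (hu : ‖u‖ = 1) (a : (ℝ ∙ u)ᗮ) (s : ℝ) :
    ‖(a : E) + s • u‖ ^ 2 = ‖a‖ ^ 2 + s ^ 2 := by
  have hau : ⟪(a : E), u⟫ = 0 := mem_orthogonal_singleton_iff_inner_left.mp a.2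
  rw [norm_add_sq_real, real_inner_smul_right, hau, norm_smul, hu, Real.norm_eq_abs, mul_one,
    sq_abs, coe_norm]
  ring

theorem norm_sphereChart (hu : ‖u‖ = 1) {a : (ℝ ∙ u)ᗮ} (ha : ‖a‖ ≤ 1) :
    ‖sphereChart u a‖ = 1 := by
  have h : ‖sphereChart u a‖ ^ 2 = 1 := by
    rw [sphereChart, norm_coe_add_smul_sq hu, Real.sq_sqrt (by nlinarith [norm_nonneg a])]
    ring
  exact (pow_eq_one_iff_of_nonneg (norm_nonneg _) two_ne_zero).mp h

theorem orthogonalProjectionOnto_sphereChart (a : (ℝ ∙ u)ᗮ) :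
    (ℝ ∙ u)ᗮ.orthogonalProjectionOnto (sphereChart u a) = a := by
  simp [sphereChart, orthogonalProjectionOnto_orthogonalComplement_singleton_eq_zero]

theorem sphereChart_orthogonalProjectionOnto (hu : ‖u‖ = 1) {y : E} (hy : ‖y‖ = 1)
    (hyu : 0 ≤ ⟪u, y⟫) : sphereChart u ((ℝ ∙ u)ᗮ.orthogonalProjectionOnto y) = y := by
  set a := (ℝ ∙ u)ᗮ.orthogonalProjectionOnto y
  have hy_eq : (a : E) + ⟪u, y⟫ • u = y := by
    rw [← starProjection_unit_singleton ℝ hu, add_comm, ← starProjection_apply,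
      starProjection_add_starProjection_orthogonal]
  have ha : 1 - ‖a‖ ^ 2 = ⟪u, y⟫ ^ 2 := by
    have := norm_coe_add_smul_sq hu a ⟪u, y⟫
    rw [hy_eq, hy] at this
    linarith
  rw [sphereChart, ha, Real.sqrt_sq hyu, hy_eq]

@[simp]
theorem sphereChart_zero : sphereChart u 0 = u := by
  simp [sphereChart]

theorem continuous_sphereChart : Continuous (sphereChart u) := by
  unfold sphereChart
  fun_prop

theorem contDiffAt_sphereChart_zero : ContDiffAt ℝ 1 (sphereChart u) 0 := by
  have hsqrt : ContDiffAt ℝ 1 (fun a : (ℝ ∙ u)ᗮ => √(1 - ‖a‖ ^ 2)) 0 :=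
    (contDiffAt_const.sub (contDiff_norm_sq ℝ).contDiffAt).sqrt (by simp)
  exact (ℝ ∙ u)ᗮ.subtypeL.contDiff.contDiffAt.add (hsqrt.smul contDiffAt_const)

end SphereChart

section ConeGeometry

variable {C : Set E}

theorem add_mem_of_convex_of_smul_mem (hconv : Convex ℝ C)
    (hcone : ∀ x ∈ C, ∀ t : ℝ, 0 ≤ t → t • x ∈ C) {x y : E} (hx : x ∈ C) (hy : y ∈ C) :
    x + y ∈ C := by
  have hmid := hconv hx hy (by norm_num : (0 : ℝ) ≤ 1 / 2) (by norm_num : (0 : ℝ) ≤ 1 / 2)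
    (by norm_num)
  have := hcone _ hmid 2 zero_le_two
  rwa [smul_add, smul_smul, smul_smul, show (2 : ℝ) * (1 / 2) = 1 by norm_num, one_smul,
    one_smul] at this

open scoped Pointwise in
theorem smul_mem_interior_of_cone (hcone : ∀ x ∈ C, ∀ t : ℝ, 0 ≤ t → t • x ∈ C)
    {x : E} (hx : x ∈ interior C) {t : ℝ} (ht : 0 < t) : t • x ∈ interior C := by
  have hsub : t • C ⊆ C := smul_set_subset_iff.mpr fun y hy ↦ hcone y hy t ht.le
  exact interior_mono hsub (interior_smul₀ ht.ne' C ▸ smul_mem_smul_set hx)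

theorem inner_reflection_orthogonal_singleton_self (x y : E) :
    ⟪x, (ℝ ∙ x)ᗮ.reflection y⟫ = -⟪x, y⟫ := by
  have := (ℝ ∙ x)ᗮ.reflection.inner_map_map x y
  rw [reflection_orthogonalComplement_singleton_eq_neg, inner_neg_left] at this
  linarith

theorem reflection_orthogonal_singleton_mem (hconv : Convex ℝ C)
    (hcone : ∀ x ∈ C, ∀ t : ℝ, 0 ≤ t → t • x ∈ C) {x y : E} (hx : x ∈ C) (hy : y ∈ C)
    (hxy : ⟪x, y⟫ ≤ 0) : (ℝ ∙ x)ᗮ.reflection y ∈ C := by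
  have hR : (ℝ ∙ x)ᗮ.reflection y = y + (-(2 * (⟪x, y⟫ / ‖x‖ ^ 2))) • x := by
    rw [reflection_orthogonal_apply, reflection_singleton_apply]
    simp only [RCLike.ofReal_real_eq_id, id, neg_smul]
    module
  rw [hR]
  exact add_mem_of_convex_of_smul_mem hconv hcone hy
    (hcone x hx _ (neg_nonneg.mpr (mul_nonpos_of_nonneg_of_nonpos zero_le_two
      (div_nonpos_of_nonpos_of_nonneg hxy (sq_nonneg _)))))

theorem mapsTo_reflection_cone_inter_sphere (hconv : Convex ℝ C)
    (hcone : ∀ x ∈ C, ∀ t : ℝ, 0 ≤ t → t • x ∈ C) {x : E} (hx : x ∈ C) :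
    MapsTo (ℝ ∙ x)ᗮ.reflection (C ∩ sphere 0 1 ∩ {y | ⟪x, y⟫ < 0}) (C ∩ sphere 0 1) := by
  rintro y ⟨⟨hyC, hy⟩, hxy⟩
  exact ⟨reflection_orthogonal_singleton_mem hconv hcone hx hyC hxy.le, by simpa using hy⟩

end ConeGeometry

theorem finrank_sub_one_nonneg_of_mem_sphere {F : Type*} [NormedAddCommGroup F] [NormedSpace ℝ F]
    [FiniteDimensional ℝ F] {y : F} (hy : y ∈ sphere (0 : F) 1) :
    0 ≤ (finrank ℝ F : ℝ) - 1 := by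
  rw [sub_nonneg, Nat.one_le_cast]
  exact finrank_pos_iff_exists_ne_zero.mpr ⟨y, ne_zero_of_mem_unit_sphere ⟨y, hy⟩⟩

section SphereMeasure

variable [FiniteDimensional ℝ E]

theorem finrank_orthogonal_span_singleton_eq_sub_one {u : E} (hu : u ≠ 0) :
    (finrank ℝ (ℝ ∙ u)ᗮ : ℝ) = finrank ℝ E - 1 := by
  rw [← (ℝ ∙ u).finrank_add_finrank_orthogonal, finrank_span_singleton hu]
  push_cast
  ring

variable [MeasurableSpace E] [BorelSpace E]

theorem hausdorffMeasure_sphere_inter_ball_pos {u : E} (hu : ‖u‖ = 1) {r : ℝ} (hr : 0 < r) :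
    0 < μH[(finrank ℝ E : ℝ) - 1] (sphere (0 : E) 1 ∩ ball u r) := by
  set F := (ℝ ∙ u)ᗮ
  rw [← finrank_orthogonal_span_singleton_eq_sub_one (norm_pos_iff.mp (hu ▸ one_pos))]
  have hchart : sphereChart u ⁻¹' ball u r ∈ 𝓝 0 :=
    continuous_sphereChart.continuousAt.preimage_mem_nhds (by simpa using ball_mem_nhds u hr)
  obtain ⟨ε, hε, hεball⟩ : ∃ ε > 0, ball (0 : F) ε ⊆ sphereChart u ⁻¹' ball u r ∩ closedBall 0 1 :=
    Metric.mem_nhds_iff.mp (Filter.inter_mem hchart (closedBall_mem_nhds _ one_pos))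
  have hsub : ball (0 : F) ε ⊆ F.orthogonalProjectionOnto '' (sphere 0 1 ∩ ball u r) :=
    fun a ha ↦ ⟨sphereChart u a,
      ⟨mem_sphere_zero_iff_norm.mpr (norm_sphereChart hu (by simpa using (hεball ha).2)),
        (hεball ha).1⟩,
      orthogonalProjectionOnto_sphereChart a⟩
  calc 0 < μH[finrank ℝ F] (ball (0 : F) ε) := measure_ball_pos _ _ hε
    _ ≤ μH[finrank ℝ F] (F.orthogonalProjectionOnto '' (sphere 0 1 ∩ ball u r)) :=
      measure_mono hsub
    _ ≤ μH[finrank ℝ F] (sphere 0 1 ∩ ball u r) :=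
      hausdorffMeasure_orthogonalProjectionOnto_le _ _ _ (Nat.cast_nonneg _)

theorem hausdorffMeasure_sphere_lt_top :
    μH[(finrank ℝ E : ℝ) - 1] (sphere (0 : E) 1) < ∞ := by
  refine (isCompact_sphere 0 1).measure_lt_top_of_nhdsWithin fun u hu ↦ ?_
  rw [mem_sphere_zero_iff_norm] at hu
  set F := (ℝ ∙ u)ᗮ
  rw [← finrank_orthogonal_span_singleton_eq_sub_one (norm_pos_iff.mp (hu ▸ one_pos))]
  obtain ⟨K, t, ht, hlip⟩ := (contDiffAt_sphereChart_zero (u := u)).exists_lipschitzOnWith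
  obtain ⟨ε, hε, hεt⟩ := Metric.mem_nhds_iff.mp ht
  have hnhds : {y | 0 < ⟪u, y⟫} ∩ F.orthogonalProjectionOnto ⁻¹' ball 0 ε ∈ 𝓝 u := by
    refine IsOpen.mem_nhds ?_ ⟨by simp [hu], by
      simpa [F, orthogonalProjectionOnto_orthogonalComplement_singleton_eq_zero] using hε⟩
    exact (isOpen_lt continuous_const (continuous_const.inner continuous_id)).inter
      (isOpen_ball.preimage F.orthogonalProjectionOnto.continuous)
  refine ⟨_, inter_mem_nhdsWithin _ hnhds, ?_⟩
  calc μH[finrank ℝ F] (sphere 0 1 ∩ ({y | 0 < ⟪u, y⟫} ∩ F.orthogonalProjectionOnto ⁻¹' ball 0 ε))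
      ≤ μH[finrank ℝ F] (sphereChart u '' ball 0 ε) := by
        refine measure_mono ?_
        rintro y ⟨hy, hyu, hyε⟩
        exact ⟨_, hyε, sphereChart_orthogonalProjectionOnto hu (mem_sphere_zero_iff_norm.mp hy)
          (le_of_lt hyu)⟩
    _ ≤ K ^ (finrank ℝ F : ℝ) * μH[finrank ℝ F] (ball (0 : F) ε) :=
      (hlip.mono hεt).hausdorffMeasure_image_le (Nat.cast_nonneg _)
    _ < ∞ := ENNReal.mul_lt_top (by simp) measure_ball_lt_top

theorem Submodule.hausdorffMeasure_inter_sphere_lt_top (V : Submodule ℝ E) :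
    μH[(finrank ℝ V : ℝ) - 1] ((V : Set E) ∩ sphere 0 1) < ∞ := by
  have himage : (V : Set E) ∩ sphere 0 1 = (↑) '' sphere (0 : V) 1 := by
    ext y
    simp [and_comm]
  rcases (sphere (0 : V) 1).eq_empty_or_nonempty with h | ⟨y, hy⟩
  · simp [himage, h]
  · rw [himage, isometry_subtype_coe.hausdorffMeasure_image
      (Or.inl (finrank_sub_one_nonneg_of_mem_sphere hy))]
    exact hausdorffMeasure_sphere_lt_top

end SphereMeasure

section CenterOfMass

variable [FiniteDimensional ℝ E] [MeasurableSpace E] [BorelSpace E] {C : Set E}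

theorem hausdorffMeasure_inter_sphere_inter_pos_of_interior_nonempty
    (hconv : Convex ℝ C) (hcone : ∀ x ∈ C, ∀ t : ℝ, 0 ≤ t → t • x ∈ C)
    (hint : (interior C).Nonempty) {x : E} (hx : x ∈ C) (hx1 : ‖x‖ = 1) {U : Set E}
    (hU : IsOpen U) (hxU : x ∈ U) :
    0 < μH[(finrank ℝ E : ℝ) - 1] (C ∩ sphere 0 1 ∩ U) := by
  set U' := {y : E | y ≠ 0} ∩ (fun y ↦ ‖y‖⁻¹ • y) ⁻¹' U
  have hU' : IsOpen U' :=
    ((continuousOn_id.norm.inv₀ fun _ hy ↦ norm_ne_zero_iff.mpr hy).smul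
      continuousOn_id).isOpen_inter_preimage isOpen_ne hU
  have hxU' : x ∈ U' := ⟨norm_ne_zero_iff.mp (by simp [hx1]), by simpa [hx1] using hxU⟩
  have hxcl : x ∈ closure (interior C) :=
    hconv.closure_interior_eq_closure_of_nonempty_interior hint ▸ subset_closure hx
  obtain ⟨y, ⟨hy0, hyU⟩, hyC⟩ := mem_closure_iff.mp hxcl U' hU' hxU'
  have hu : ‖y‖⁻¹ • y ∈ interior C := smul_mem_interior_of_cone hcone hyC (by positivity)
  obtain ⟨r, hr, hball⟩ := Metric.isOpen_iff.mp (isOpen_interior.inter hU) _ ⟨hu, hyU⟩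
  calc 0 < μH[(finrank ℝ E : ℝ) - 1] (sphere 0 1 ∩ ball (‖y‖⁻¹ • y) r) :=
        hausdorffMeasure_sphere_inter_ball_pos (norm_smul_inv_norm hy0) hr
    _ ≤ μH[(finrank ℝ E : ℝ) - 1] (C ∩ sphere 0 1 ∩ U) :=
        measure_mono fun z ⟨hz, hzr⟩ ↦ ⟨⟨interior_subset (hball hzr).1, hz⟩, (hball hzr).2⟩

theorem hausdorffMeasure_cone_inter_sphere_inter_pos (hconv : Convex ℝ C)
    (hcone : ∀ x ∈ C, ∀ t : ℝ, 0 ≤ t → t • x ∈ C) {x : E} (hx : x ∈ C) (hx1 : ‖x‖ = 1)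
    {U : Set E} (hU : IsOpen U) (hxU : x ∈ U) :
    0 < μH[(finrank ℝ (span ℝ C) : ℝ) - 1] (C ∩ sphere 0 1 ∩ U) := by
  set V := span ℝ C
  set C' : Set V := (↑) ⁻¹' C
  have hconv' : Convex ℝ C' := hconv.linear_preimage V.subtype
  have h0 : (0 : V) ∈ C' := by simpa [C'] using hcone x hx 0 le_rfl
  have hint : (interior C').Nonempty := by
    rw [hconv'.interior_nonempty_iff_affineSpan_eq_top,
      AffineSubspace.affineSpan_eq_top_iff_vectorSpan_eq_top_of_nonempty ℝ V V ⟨0, h0⟩,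
      vectorSpan_eq_span_vsub_set_right ℝ h0]
    simp [C', V]
  have hx' : (⟨x, subset_span hx⟩ : V) ∈ sphere 0 1 := by simpa using hx1
  have hpos := hausdorffMeasure_inter_sphere_inter_pos_of_interior_nonempty hconv'
    (fun y hy t ht ↦ hcone y hy t ht) hint (x := ⟨x, subset_span hx⟩) hx (by simpa using hx1)
    (hU.preimage continuous_subtype_val) hxU
  rw [← isometry_subtype_coe.hausdorffMeasure_image
    (Or.inl (finrank_sub_one_nonneg_of_mem_sphere hx'))] at hpos
  refine hpos.trans_le (measure_mono ?_)
  rintro _ ⟨y, ⟨⟨hyC, hy⟩, hyU⟩, rfl⟩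
  exact ⟨⟨hyC, by simpa using hy⟩, hyU⟩

theorem integrableOn_cone_inter_sphere :
    IntegrableOn (fun y : E ↦ y) (C ∩ sphere 0 1) μH[(finrank ℝ (span ℝ C) : ℝ) - 1] := by
  have hV : MeasurableSet ((span ℝ C : Set E) ∩ sphere 0 1) :=
    ((span ℝ C).closed_of_finiteDimensional.inter isClosed_sphere).measurableSet
  refine IntegrableOn.mono_set ?_ (inter_subset_inter_left _ (subset_span (R := ℝ)))
  refine Measure.integrableOn_of_bounded (M := 1)
    (span ℝ C).hausdorffMeasure_inter_sphere_lt_top.ne aestronglyMeasurable_id ?_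
  exact ae_restrict_of_forall_mem hV fun y hy ↦ by simp [mem_sphere_zero_iff_norm.mp hy.2]

theorem integral_inner_cone_inter_sphere_nonneg (hcl : IsClosed C) (hconv : Convex ℝ C)
    (hcone : ∀ x ∈ C, ∀ t : ℝ, 0 ≤ t → t • x ∈ C) {x : E} (hx : x ∈ C) :
    0 ≤ ∫ y in C ∩ sphere 0 1, ⟪x, y⟫ ∂μH[(finrank ℝ (span ℝ C) : ℝ) - 1] :=
  setIntegral_nonneg_of_odd (hcl.inter isClosed_sphere).measurableSet
    (continuous_const.inner continuous_id).measurable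
    (integrableOn_cone_inter_sphere.const_inner x)
    (by simpa using (ℝ ∙ x)ᗮ.reflection.toIsometryEquiv.measurePreserving_hausdorffMeasure _)
    (ℝ ∙ x)ᗮ.reflection.toHomeomorph.measurableEmbedding
    (inner_reflection_orthogonal_singleton_self x)
    (mapsTo_reflection_cone_inter_sphere hconv hcone hx)

theorem integral_inner_cone_inter_sphere_pos (hcl : IsClosed C) (hconv : Convex ℝ C)
    (hcone : ∀ x ∈ C, ∀ t : ℝ, 0 ≤ t → t • x ∈ C) {x : E} (hx : x ∈ C) (hnx : -x ∉ C) :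
    0 < ∫ y in C ∩ sphere 0 1, ⟪x, y⟫ ∂μH[(finrank ℝ (span ℝ C) : ℝ) - 1] := by
  set R := (ℝ ∙ x)ᗮ.reflection
  have hx0 : x ≠ 0 := by rintro rfl; simp_all
  have hO : IsOpen ({y | 0 < ⟪x, y⟫} ∩ R ⁻¹' Cᶜ) :=
    (isOpen_lt continuous_const (continuous_const.inner continuous_id)).inter
      (hcl.isOpen_compl.preimage R.continuous)
  have hxO : ‖x‖⁻¹ • x ∈ {y | 0 < ⟪x, y⟫} ∩ R ⁻¹' Cᶜ := by
    refine ⟨by simp [real_inner_smul_right, hx0], fun h ↦ hnx ?_⟩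
    have := hcone _ h ‖x‖ (norm_nonneg x)
    simpa [R, reflection_orthogonalComplement_singleton_eq_neg, smul_smul, hx0] using this
  refine setIntegral_pos_of_odd (hcl.inter isClosed_sphere).measurableSet
    (continuous_const.inner continuous_id).measurable
    (integrableOn_cone_inter_sphere.const_inner x)
    (by simpa using R.toIsometryEquiv.measurePreserving_hausdorffMeasure _)
    R.toHomeomorph.measurableEmbedding
    (inner_reflection_orthogonal_singleton_self x)
    (mapsTo_reflection_cone_inter_sphere hconv hcone hx)
    (reflection_involutive _) inter_subset_left (fun y hy ↦ hy.2.1) (fun y hy hR ↦ hy.2.2 hR.1)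
    (hausdorffMeasure_cone_inter_sphere_inter_pos hconv hcone (hcone x hx _ (by positivity))
      (norm_smul_inv_norm hx0) hO hxO)

end CenterOfMass

theorem cone_center_of_mass_balanced_general (n : ℕ) (C : Set (EuclideanSpace ℝ (Fin n)))
    (hcl : IsClosed C) (hconv : Convex ℝ C)
    (hcone : ∀ x ∈ C, ∀ t : ℝ, 0 ≤ t → t • x ∈ C)
    (v : EuclideanSpace ℝ (Fin n))
    (hv : v = ∫ x in C ∩ Metric.sphere (0 : EuclideanSpace ℝ (Fin n)) 1, x
      ∂(μH[(Module.finrank ℝ (Submodule.span ℝ C) : ℝ) - 1])) :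
    (∀ x ∈ C, 0 ≤ ⟪x, v⟫) ∧
      {x ∈ C | ⟪x, v⟫ = 0} = -{x ∈ C | ⟪x, v⟫ = 0} := by
  have hinner (x) : ⟪x, v⟫ = ∫ y in C ∩ sphere 0 1, ⟪x, y⟫ ∂μH[(finrank ℝ (span ℝ C) : ℝ) - 1] := by
    rw [hv, integral_inner integrableOn_cone_inter_sphere]
  have hneg : ∀ x ∈ C, ⟪x, v⟫ = 0 → -x ∈ C := fun x hx hxv ↦ by
    by_contra hnx
    exact (integral_inner_cone_inter_sphere_pos hcl hconv hcone hx hnx).ne' (hinner x ▸ hxv)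
  refine ⟨fun x hx ↦ hinner x ▸ integral_inner_cone_inter_sphere_nonneg hcl hconv hcone hx, ?_⟩
  ext x
  simp only [mem_ofPred_eq, neg_ofPred, inner_neg_left, neg_eq_zero, and_congr_left_iff]
  refine fun hxv ↦ ⟨fun hx ↦ hneg x hx hxv, fun hx ↦ ?_⟩
  simpa using hneg (-x) hx (by rw [inner_neg_left, hxv, neg_zero])

/-- Let `C ⊆ ℝⁿ` be a nonempty closed convex cone which is relatively proper, `m = dim span C`,
and `v` the Bochner integral of the identity over `C ∩ S^{n-1}` with respect to
`(m-1)`-dimensional Hausdorff measure. Then (a) `⟨x, v⟩ ≥ 0` for every `x ∈ C`, and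
(b) the set `{x ∈ C : ⟨x, v⟩ = 0}` is symmetric about the origin. -/
theorem cone_center_of_mass_balanced (n : ℕ) (C : Set (EuclideanSpace ℝ (Fin n)))
    (hne : C.Nonempty) (hcl : IsClosed C) (hconv : Convex ℝ C)
    (hcone : ∀ x ∈ C, ∀ t : ℝ, 0 ≤ t → t • x ∈ C)
    (hproper : C ≠ (Submodule.span ℝ C : Set (EuclideanSpace ℝ (Fin n))))
    (v : EuclideanSpace ℝ (Fin n))
    (hv : v = ∫ x in C ∩ Metric.sphere (0 : EuclideanSpace ℝ (Fin n)) 1, x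
      ∂(μH[(Module.finrank ℝ (Submodule.span ℝ C) : ℝ) - 1])) :
    (∀ x ∈ C, 0 ≤ ⟪x, v⟫) ∧
      {x ∈ C | ⟪x, v⟫ = 0} = -{x ∈ C | ⟪x, v⟫ = 0} :=
  cone_center_of_mass_balanced_general n C hcl hconv hcone v hv
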